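/- arXiv:2510.10088 — 2 statements merged into one kernel-verified Lean document; each statement's English description precedes it below -/
import Mathlib

section
/- Let r and t be positive integers with r > 1, and let x > 0. Then Θ(r,r,t,x) = Σ_{ℓ=0}^{r} binom(r,ℓ) x^ℓ Θ(ℓ, r−ℓ, t+r, x). -/
/-!
Expanding `(n + m x)^r` by the binomial theorem gives, term by term,
`1 / (n^r m^r (n + m x)^t) = ∑ ℓ, C(r, ℓ) x^ℓ / (n^ℓ m^(r-ℓ) (n + m x)^(t+r))`.
For natural exponents every double series involved converges absolutely, so the finite sum can be
moved outside the summation.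
-/
open Real Filter Topology Finset

noncomputable def Theta (r s t x : ℝ) : ℝ :=
  ∑' n : ℕ+, ∑' m : ℕ+, 1 / ((n : ℝ) ^ r * (m : ℝ) ^ s * ((n : ℝ) + (m : ℝ) * x) ^ t)

lemma one_div_pow_mul_pow_mul_pow_eq_sum_choose {K : Type*} [Field K] (r t : ℕ) {a b x : K}
    (ha : a ≠ 0) (hb : b ≠ 0) (hc : a + b * x ≠ 0) :
    1 / (a ^ r * b ^ r * (a + b * x) ^ t) =
      ∑ ℓ ∈ range (r + 1),
        (r.choose ℓ : K) * x ^ ℓ * (1 / (a ^ ℓ * b ^ (r - ℓ) * (a + b * x) ^ (t + r))) := by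
  calc 1 / (a ^ r * b ^ r * (a + b * x) ^ t)
      = (b * x + a) ^ r / (a ^ r * b ^ r * (a + b * x) ^ (t + r)) := by
        rw [add_comm (b * x), pow_add]; field_simp
    _ = ∑ ℓ ∈ range (r + 1), (b * x) ^ ℓ * a ^ (r - ℓ) * r.choose ℓ /
          (a ^ r * b ^ r * (a + b * x) ^ (t + r)) := by rw [add_pow, sum_div]
    _ = _ := sum_congr rfl fun ℓ hℓ => by
        rw [← pow_mul_pow_sub a (mem_range_succ_iff.mp hℓ),
          ← pow_sub_mul_pow b (mem_range_succ_iff.mp hℓ)]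
        field_simp
        ring

noncomputable def thetaTerm (a b c : ℕ) (x : ℝ) (p : ℕ+ × ℕ+) : ℝ :=
  1 / ((p.1 : ℝ) ^ a * (p.2 : ℝ) ^ b * ((p.1 : ℝ) + p.2 * x) ^ c)

lemma summable_one_div_pnat_pow {k : ℕ} (hk : 2 ≤ k) : Summable fun n : ℕ+ => 1 / (n : ℝ) ^ k :=
  summable_pnat_iff_summable_nat.mpr (summable_one_div_nat_pow.mpr (by omega))

/-- Bounding `(n + m x)^(c₁ + c₂) ≥ n^c₁ (m x)^c₂` dominates the double series by a product
of two `p`-series. -/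
lemma summable_thetaTerm {a b c₁ c₂ : ℕ} {x : ℝ} (hx : 0 < x) (ha : 2 ≤ a + c₁)
    (hb : 2 ≤ b + c₂) : Summable (thetaTerm a b (c₁ + c₂) x) := by
  have hprod := ((summable_one_div_pnat_pow ha).mul_of_nonneg (summable_one_div_pnat_pow hb)
    (fun _ => by positivity) fun _ => by positivity).mul_left (1 / x ^ c₂)
  refine hprod.of_nonneg_of_le (fun p => by unfold thetaTerm; positivity) fun ⟨n, m⟩ => ?_
  have hn : (0 : ℝ) < n := by exact_mod_cast n.pos
  have hm : (0 : ℝ) < m := by exact_mod_cast m.pos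
  have hpow : (n : ℝ) ^ c₁ * (m * x) ^ c₂ ≤ (n + m * x) ^ (c₁ + c₂) := by
    rw [pow_add]
    gcongr <;> nlinarith [mul_pos hm hx]
  simp only [thetaTerm, div_mul_div_comm, one_mul]
  gcongr 1 / ?_
  calc x ^ c₂ * ((n : ℝ) ^ (a + c₁) * (m : ℝ) ^ (b + c₂))
      = (n : ℝ) ^ a * (m : ℝ) ^ b * ((n : ℝ) ^ c₁ * (m * x) ^ c₂) := by ring
    _ ≤ (n : ℝ) ^ a * (m : ℝ) ^ b * (n + m * x) ^ (c₁ + c₂) := by gcongr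

lemma theta_natCast_eq_tsum {a b c : ℕ} {x : ℝ} (h : Summable (thetaTerm a b c x)) :
    Theta a b c x = ∑' p, thetaTerm a b c x p := by
  simp only [Theta, rpow_natCast, h.tsum_prod' h.prod_factor]
  rfl

lemma thetaTerm_eq_sum_choose (r t : ℕ) {x : ℝ} (hx : 0 < x) (p : ℕ+ × ℕ+) :
    thetaTerm r r t x p =
      ∑ ℓ ∈ range (r + 1), (r.choose ℓ : ℝ) * x ^ ℓ * thetaTerm ℓ (r - ℓ) (t + r) x p := by
  have hn : (0 : ℝ) < p.1 := by exact_mod_cast p.1.pos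
  have hm : (0 : ℝ) < p.2 := by exact_mod_cast p.2.pos
  exact one_div_pow_mul_pow_mul_pow_eq_sum_choose r t hn.ne' hm.ne' (by positivity)

theorem stmt4_general (r t : ℕ) (hr : 1 < r) (x : ℝ) (hx : 0 < x) :
    Theta r r t x =
      ∑ ℓ ∈ Finset.range (r + 1),
        (r.choose ℓ : ℝ) * x ^ ℓ * Theta ℓ ((r : ℝ) - ℓ) ((t : ℝ) + r) x := by
  have hsum : ∀ ℓ ∈ range (r + 1), Summable (thetaTerm ℓ (r - ℓ) (t + r) x) := fun ℓ hℓ => by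
    have hℓ := mem_range_succ_iff.mp hℓ
    have := summable_thetaTerm (a := ℓ) (b := r - ℓ) (c₁ := r - ℓ) (c₂ := t + ℓ) hx
      (by omega) (by omega)
    rwa [show r - ℓ + (t + ℓ) = t + r by omega] at this
  have hcast : ∀ ℓ ∈ range (r + 1), Theta ℓ ((r : ℝ) - ℓ) ((t : ℝ) + r) x =
      ∑' p, thetaTerm ℓ (r - ℓ) (t + r) x p := fun ℓ hℓ => by
    rw [← Nat.cast_sub (mem_range_succ_iff.mp hℓ), ← Nat.cast_add]
    exact theta_natCast_eq_tsum (hsum ℓ hℓ)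
  have hrr : Summable (thetaTerm r r t x) := by
    simpa using summable_thetaTerm (a := r) (b := r) (c₁ := 0) (c₂ := t) hx (by omega) (by omega)
  rw [theta_natCast_eq_tsum hrr, sum_congr rfl fun ℓ hℓ => by rw [hcast ℓ hℓ, ← tsum_mul_left],
    ← Summable.tsum_finsetSum fun ℓ hℓ => (hsum ℓ hℓ).mul_left _]
  exact tsum_congr (thetaTerm_eq_sum_choose r t hx)

theorem stmt4 (r t : ℕ) (hr : 1 < r) (ht : 0 < t) (x : ℝ) (hx : 0 < x) :
    Theta r r t x =
      ∑ ℓ ∈ Finset.range (r + 1),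
        (r.choose ℓ : ℝ) * x ^ ℓ * Theta ℓ ((r : ℝ) - ℓ) ((t : ℝ) + r) x :=
  stmt4_general r t hr x hx
end

section
/- Let r ≥ 2 be an integer and let y > 0. Then Σ_{n=1}^∞ Σ_{m=1}^∞ y / ( n · m^{r−1} · (n + m y) ) = γ ζ(r) + Σ_{m=1}^∞ ψ(my + 1)/m^r, where all series converge absolutely. -/
open Real Filter Topology Finset

noncomputable def zetaR (s : ℝ) : ℝ := ∑' n : ℕ+, 1 / (n : ℝ) ^ s

noncomputable def psi (y : ℝ) : ℝ := deriv Real.Gamma y / Real.Gamma y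

local notation "γ" => Real.eulerMascheroniConstant

/-! Log-convexity of `Γ` (Bohr–Mollerup) makes `ψ` monotone on `(0, ∞)`; with
`ψ (x + 1) = ψ x + 1 / x` this squeezes `ψ (N + 1 + x) - ψ (N + 1)` between `0` and
`⌈x⌉ / (N + 1)`, and telescoping against `ψ (N + 1) = -γ + H_N` yields the classical series
`ψ (x + 1) + γ = ∑ₙ (1 / n - 1 / (n + x))`. Since
`y / (n m^(r-1) (n + m y)) = (1 / n - 1 / (n + m y)) / m ^ r`, the inner sums over `n` are
`(ψ (m y + 1) + γ) / m ^ r`. The AM–GM bound `n + m y ≥ √(n m y)` dominates the double series by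
`√y (n m)^(-3/2)`, which justifies exchanging the order of summation. -/

section Digamma

variable {x : ℝ}

lemma differentiableAt_Gamma_of_pos (hx : 0 < x) : DifferentiableAt ℝ Gamma x :=
  differentiableAt_Gamma fun m => by linarith [(m.cast_nonneg : (0 : ℝ) ≤ m)]

lemma differentiableAt_log_Gamma (hx : 0 < x) : DifferentiableAt ℝ (log ∘ Gamma) x :=
  (differentiableAt_Gamma_of_pos hx).log (Gamma_pos_of_pos hx).ne'

lemma deriv_log_Gamma (hx : 0 < x) : deriv (log ∘ Gamma) x = psi x := by
  simpa only [Function.comp_def, psi] using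
    deriv.log (differentiableAt_Gamma_of_pos hx) (Gamma_pos_of_pos hx).ne'

lemma psi_add_one (hx : 0 < x) : psi (x + 1) = psi x + 1 / x := by
  have h_rec : ∀ w : ℝ, 0 < w → (log ∘ Gamma) (w + 1) = (log ∘ Gamma) w + log w := fun w hw => by
    simp only [Function.comp_apply, Gamma_add_one hw.ne',
      log_mul hw.ne' (Gamma_pos_of_pos hw).ne', add_comm]
  rw [← deriv_log_Gamma hx, ← deriv_log_Gamma (by positivity), ← deriv_comp_add_const, one_div,
    ← deriv_log, ← deriv_add (differentiableAt_log_Gamma hx) (differentiableAt_log hx.ne')]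
  exact Filter.EventuallyEq.deriv_eq ((eventually_gt_nhds hx).mono h_rec)

lemma psi_nat_add_one (n : ℕ) : psi (n + 1) = -γ + harmonic n := by
  rw [psi, deriv_Gamma_nat, Gamma_nat_eq_factorial]
  field_simp

lemma monotoneOn_psi : MonotoneOn psi (Set.Ioi 0) := by
  refine (convexOn_log_Gamma.monotoneOn_deriv fun x hx => differentiableAt_log_Gamma hx).congr ?_
  exact fun x hx => deriv_log_Gamma hx

lemma psi_add_nat (hx : 0 < x) (N : ℕ) : psi (x + N) = psi x + ∑ k ∈ range N, 1 / (x + k) := by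
  induction N with
  | zero => simp
  | succ N ih =>
    rw [Nat.cast_succ, ← add_assoc, psi_add_one (by positivity), ih, sum_range_succ, add_assoc]

lemma psi_add_nat_le (hx : 0 < x) (N : ℕ) : psi (x + N) ≤ psi x + N / x := by
  rw [psi_add_nat hx, add_le_add_iff_left]
  calc ∑ k ∈ range N, 1 / (x + k) ≤ ∑ _k ∈ range N, 1 / x :=
        sum_le_sum fun k _ => one_div_le_one_div_of_le hx (by simp)
    _ = N / x := by simp [div_eq_mul_inv]

lemma tendsto_psi_nat_add_sub (hx : 0 ≤ x) :
    Tendsto (fun N : ℕ => psi (N + 1 + x) - psi (N + 1)) atTop (𝓝 0) := by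
  set M : ℕ := ⌈x⌉₊
  have hbound (N : ℕ) : psi (N + 1 + x) - psi (N + 1) ≤ M * (1 / ((N : ℝ) + 1)) := by
    have hN : (0 : ℝ) < N + 1 := by positivity
    have := monotoneOn_psi (a := N + 1 + x) (b := N + 1 + M) (Set.mem_Ioi.2 (by positivity))
      (Set.mem_Ioi.2 (by positivity)) (by gcongr; exact Nat.le_ceil x)
    linarith [psi_add_nat_le hN M, mul_one_div (M : ℝ) ((N : ℝ) + 1)]
  refine squeeze_zero (fun N => sub_nonneg.2 ?_) hbound ?_
  · exact monotoneOn_psi (Set.mem_Ioi.2 (by positivity)) (Set.mem_Ioi.2 (by positivity))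
      (by linarith)
  · simpa using tendsto_one_div_add_atTop_nhds_zero_nat.const_mul (M : ℝ)

lemma hasSum_one_div_sub_one_div_add (hx : 0 ≤ x) :
    HasSum (fun n : ℕ => 1 / ((n : ℝ) + 1) - 1 / (n + 1 + x)) (psi (x + 1) + γ) := by
  have hpartial (N : ℕ) : ∑ k ∈ range N, (1 / ((k : ℝ) + 1) - 1 / (k + 1 + x)) =
      psi (x + 1) + γ - (psi (N + 1 + x) - psi (N + 1)) := by
    have hharmonic : ∑ k ∈ range N, 1 / ((k : ℝ) + 1) = harmonic N := by
      simp [harmonic]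
    have hshift : ∑ k ∈ range N, 1 / ((k : ℝ) + 1 + x) = psi (N + 1 + x) - psi (x + 1) := by
      rw [show (N : ℝ) + 1 + x = x + 1 + N by ring, psi_add_nat (by positivity)]
      simp only [add_sub_cancel_left, add_comm, add_left_comm]
    rw [sum_sub_distrib, hharmonic, hshift]
    linarith [psi_nat_add_one N]
  rw [hasSum_iff_tendsto_nat_of_nonneg]
  · simp_rw [hpartial]
    simpa using (tendsto_psi_nat_add_sub hx).const_sub (psi (x + 1) + γ)
  · intro n
    exact sub_nonneg.2 (one_div_le_one_div_of_le (by positivity) (by linarith))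

lemma hasSum_pnat_one_div_sub_one_div_add (hx : 0 ≤ x) :
    HasSum (fun n : ℕ+ => 1 / (n : ℝ) - 1 / (n + x)) (psi (x + 1) + γ) := by
  refine (hasSum_pnat_iff_hasSum_succ (f := fun n : ℕ => 1 / (n : ℝ) - 1 / (n + x))).2 ?_
  simpa using hasSum_one_div_sub_one_div_add hx

end Digamma

lemma div_mul_pow_mul_add_eq {n m y : ℝ} (hn : n ≠ 0) (hm : m ≠ 0) (hnm : n + m * y ≠ 0)
    {r : ℕ} (hr : 1 ≤ r) :
    y / (n * m ^ (r - 1) * (n + m * y)) = (1 / n - 1 / (n + m * y)) / m ^ r := by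
  obtain ⟨k, rfl⟩ := Nat.exists_eq_add_of_le' hr
  rw [Nat.add_sub_cancel, div_sub_div _ _ hn hnm, div_div, div_eq_div_iff
    (mul_ne_zero (mul_ne_zero hn (pow_ne_zero _ hm)) hnm)
    (mul_ne_zero (mul_ne_zero hn hnm) (pow_ne_zero _ hm))]
  ring

lemma div_mul_mul_add_le {n m y : ℝ} (hn : 0 < n) (hm : 0 < m) (hy : 0 ≤ y) :
    y / (n * m * (n + m * y)) ≤ √y * ((n * √n)⁻¹ * (m * √m)⁻¹) := by
  obtain ⟨a, ha, rfl⟩ : ∃ a, 0 < a ∧ n = a ^ 2 := ⟨√n, by positivity, (sq_sqrt hn.le).symm⟩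
  obtain ⟨b, hb, rfl⟩ : ∃ b, 0 < b ∧ m = b ^ 2 := ⟨√m, by positivity, (sq_sqrt hm.le).symm⟩
  obtain ⟨c, hc, rfl⟩ : ∃ c, 0 ≤ c ∧ y = c ^ 2 := ⟨√y, by positivity, (sq_sqrt hy).symm⟩
  rw [sqrt_sq ha.le, sqrt_sq hb.le, sqrt_sq hc, div_le_iff₀ (by positivity)]
  field_simp
  nlinarith [sq_nonneg (a - b * c), mul_pos ha hb, mul_nonneg (mul_pos ha hb).le hc]

lemma summable_pnat_inv_mul_sqrt : Summable fun n : ℕ+ => ((n : ℝ) * √n)⁻¹ := by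
  refine (summable_pnat_iff_summable_nat (f := fun n : ℕ => ((n : ℝ) * √n)⁻¹)).2
    (((summable_nat_rpow_inv (p := 3 / 2)).2 (by norm_num)).congr fun n => ?_)
  rw [sqrt_eq_rpow, ← rpow_one_add' (Nat.cast_nonneg n) (by norm_num)]
  norm_num

lemma summable_div_mul_pow_mul_add {r : ℕ} (hr : 2 ≤ r) {y : ℝ} (hy : 0 ≤ y) :
    Summable fun p : ℕ+ × ℕ+ =>
      y / ((p.1 : ℝ) * (p.2 : ℝ) ^ (r - 1) * ((p.1 : ℝ) + (p.2 : ℝ) * y)) := by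
  refine Summable.of_nonneg_of_le (fun p => by positivity) (fun p => ?_)
    ((summable_pnat_inv_mul_sqrt.mul_of_nonneg summable_pnat_inv_mul_sqrt
      (fun n => by positivity) (fun m => by positivity)).mul_left √y)
  have hn : (0 : ℝ) < p.1 := by positivity
  have hm : (1 : ℝ) ≤ p.2 := by exact_mod_cast p.2.pos
  refine le_trans ?_ (div_mul_mul_add_le hn (by positivity) hy)
  gcongr
  calc (p.2 : ℝ) = (p.2 : ℝ) ^ 1 := (pow_one _).symm
    _ ≤ (p.2 : ℝ) ^ (r - 1) := pow_le_pow_right₀ hm (by omega)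

lemma hasSum_zetaR {r : ℕ} (hr : 1 < r) : HasSum (fun n : ℕ+ => 1 / (n : ℝ) ^ r) (zetaR r) := by
  simpa [zetaR, rpow_natCast] using
    (summable_pnat_iff_summable_nat.2 (summable_one_div_nat_pow.2 hr)).hasSum

lemma hasSum_div_mul_pow_mul_add {r : ℕ} (hr : 1 ≤ r) {y : ℝ} (hy : 0 ≤ y) (m : ℕ+) :
    HasSum (fun n : ℕ+ => y / ((n : ℝ) * (m : ℝ) ^ (r - 1) * ((n : ℝ) + (m : ℝ) * y)))
      ((psi ((m : ℝ) * y + 1) + γ) / (m : ℝ) ^ r) := by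
  refine ((hasSum_pnat_one_div_sub_one_div_add (x := (m : ℝ) * y) (by positivity)).div_const
    ((m : ℝ) ^ r)).congr_fun fun n => ?_
  have hn : (0 : ℝ) < n := by positivity
  exact div_mul_pow_mul_add_eq hn.ne' (by positivity) (by positivity) hr

theorem stmt13 (r : ℕ) (hr : 2 ≤ r) (y : ℝ) (hy : 0 < y) :
    (∑' n : ℕ+, ∑' m : ℕ+, y / ((n : ℝ) * (m : ℝ) ^ (r - 1) * ((n : ℝ) + (m : ℝ) * y)))
      = Real.eulerMascheroniConstant * zetaR r + ∑' m : ℕ+, psi ((m : ℝ) * y + 1) / (m : ℝ) ^ r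
    ∧ Summable (fun p : ℕ+ × ℕ+ =>
        y / ((p.1 : ℝ) * (p.2 : ℝ) ^ (r - 1) * ((p.1 : ℝ) + (p.2 : ℝ) * y)))
    ∧ Summable (fun m : ℕ+ => psi ((m : ℝ) * y + 1) / (m : ℝ) ^ r) := by
  have hF := summable_div_mul_pow_mul_add hr hy.le
  have hcolumns : HasSum (fun m : ℕ+ => (psi ((m : ℝ) * y + 1) + γ) / (m : ℝ) ^ r)
      (∑' p : ℕ+ × ℕ+, y / ((p.1 : ℝ) * (p.2 : ℝ) ^ (r - 1) * ((p.1 : ℝ) + (p.2 : ℝ) * y))) :=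
    ((Equiv.prodComm _ _).hasSum_iff.2 hF.hasSum).prod_fiberwise
      (hasSum_div_mul_pow_mul_add (by omega) hy.le)
  have hpsi := hcolumns.sub ((hasSum_zetaR (by omega : 1 < r)).mul_left γ)
  simp_rw [add_div, add_sub_assoc, mul_one_div, sub_self, add_zero] at hpsi
  refine ⟨?_, hF, hpsi.summable⟩
  rw [hpsi.tsum_eq, ← hF.tsum_prod' hF.prod_factor]
  ring
end
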